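/- (Ballot-type lower bound) Let (S_k) be a Gaussian random walk with i.i.d. N(0,σ²) increments, σ² > 0, S_0 = 0, and let 0 < δ < 1. There exists C = C(σ,δ) such that for all n ≥ 1: P(S_n ∈ (0,δ) and S_k ≤ 1 for all 0 < k < n) ≥ 1/(C·n^{3/2}). -/

import Mathlib

/-!
Write `S_k = ξ₀ + ⋯ + ξ_{k-1}`. By the cyclic lemma, whenever `S_n ≥ 0` some cyclic rotation of
`(ξ₀, …, ξ_{n-1})` has all its partial sums at most `S_n`. The rotations of an i.i.d. sequence all
have the law of the sequence, so
`P(S_n ∈ (0,δ)) ≤ n · P(S_n ∈ (0,δ), S_k ≤ S_n for all k ≤ n)`, and the latter event forces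
`S_k < δ < 1`. Since `S_n ~ N(0, nσ²)`, its density is at least `c/√n` on `(0,δ)`, so
`P(S_n ∈ (0,δ)) ≥ cδ/√n`, which gives the bound `≳ n^{-3/2}`.
-/

open MeasureTheory ProbabilityTheory Real Filter

open Finset Function
open scoped NNReal ENNReal

section CyclicLemma

variable {M : Type*}

lemma sum_range_add_mod_self [AddCommMonoid M] (y : ℕ → M) (n r : ℕ) :
    ∑ i ∈ range (n + r), y (i % n) = ∑ i ∈ range n, y i + ∑ i ∈ range r, y (i % n) := by
  rw [sum_range_add]
  congr 1
  · exact sum_congr rfl fun i hi => by rw [Nat.mod_eq_of_lt (mem_range.mp hi)]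
  · simp only [Nat.add_mod_left]

lemma sum_range_rotate [AddCancelCommMonoid M] (y : ℕ → M) (n j : ℕ) :
    ∑ i ∈ range n, y ((j + i) % n) = ∑ i ∈ range n, y i := by
  have h := sum_range_add (fun i => y (i % n)) j n
  rw [add_comm j n, sum_range_add_mod_self, add_comm] at h
  exact (add_left_cancel h).symm

/-- Rotating to start at a maximum of the partial sums `∑ i ∈ range m, y i`, `m < n`, works. -/
theorem exists_rotate_sum_range_le [AddCommGroup M] [LinearOrder M] [IsOrderedAddMonoid M]
    (y : ℕ → M) {n : ℕ} (hn : 0 < n) (hy : 0 ≤ ∑ i ∈ range n, y i) :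
    ∃ j < n, ∀ k ≤ n, ∑ i ∈ range k, y ((j + i) % n) ≤ ∑ i ∈ range n, y i := by
  set Z : ℕ → M := fun r => ∑ i ∈ range r, y (i % n)
  obtain ⟨m, hm, hmax⟩ := (range n).exists_max_image Z (nonempty_range_iff.mpr hn.ne')
  refine ⟨m, mem_range.mp hm, fun k hk => ?_⟩
  have hrot : ∑ i ∈ range k, y ((m + i) % n) = Z (m + k) - Z m :=
    eq_sub_of_add_eq' (sum_range_add _ m k).symm
  rw [hrot]
  rcases lt_or_ge (m + k) n with h | h
  · exact (sub_nonpos.mpr (hmax _ (mem_range.mpr h))).trans hy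
  · obtain ⟨r, hr⟩ := Nat.exists_eq_add_of_le h
    have hZr : Z r ≤ Z m := hmax r (mem_range.mpr (by simp at hm; omega))
    have hper : Z (n + r) = ∑ i ∈ range n, y i + Z r := sum_range_add_mod_self y n r
    rw [hr, hper, add_sub_assoc]
    exact add_le_of_nonpos_right (sub_nonpos.mpr hZr)

/-- Extended by the identity beyond `n` so that it is injective on all of `ℕ`: a rotated i.i.d.
sequence is then again an i.i.d. sequence indexed by `ℕ`. -/
def cyclicShift (n j i : ℕ) : ℕ := if i < n then (j + i) % n else i

lemma cyclicShift_injective (n j : ℕ) : Injective (cyclicShift n j) := by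
  intro a b hab
  unfold cyclicShift at hab
  split_ifs at hab with ha hb hb
  · exact (Nat.ModEq.add_left_cancel' j hab).eq_of_lt_of_lt ha hb
  · exact absurd (hab ▸ Nat.mod_lt _ (by omega)) (by omega)
  · exact absurd (hab ▸ Nat.mod_lt _ (by omega)) (by omega)
  · exact hab

lemma sum_range_cyclicShift [AddCommMonoid M] (y : ℕ → M) {n k : ℕ} (j : ℕ) (hk : k ≤ n) :
    ∑ i ∈ range k, y (cyclicShift n j i) = ∑ i ∈ range k, y ((j + i) % n) :=
  sum_congr rfl fun i hi => by rw [cyclicShift, if_pos (by simp at hi; omega)]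

end CyclicLemma

namespace ProbabilityTheory

variable {Ω : Type*} [MeasurableSpace Ω] {P : Measure Ω}

lemma iIndepFun.map_comp_eq_map {ι β : Type*} [Countable ι] [MeasurableSpace β]
    {ξ : ι → Ω → β} {μ : Measure β} (h : iIndepFun ξ P) (hξ : ∀ i, AEMeasurable (ξ i) P)
    (hlaw : ∀ i, P.map (ξ i) = μ) {g : ι → ι} (hg : Injective g) :
    P.map (fun ω i => ξ (g i) ω) = P.map (fun ω i => ξ i ω) := by
  rw [(h.precomp hg).map_fun_eq_infinitePi_map₀' fun i => hξ (g i),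
    h.map_fun_eq_infinitePi_map₀' hξ]
  simp only [hlaw]

theorem iIndepFun.measure_sum_range_mem_le_mul {ξ : ℕ → Ω → ℝ} {μ : Measure ℝ}
    (h : iIndepFun ξ P) (hξ : ∀ i, AEMeasurable (ξ i) P) (hlaw : ∀ i, P.map (ξ i) = μ)
    {A : Set ℝ} (hA : MeasurableSet A) (hA0 : A ⊆ Set.Ici 0) {n : ℕ} (hn : 0 < n) :
    P {ω | ∑ i ∈ range n, ξ i ω ∈ A} ≤
      n * P {ω | ∑ i ∈ range n, ξ i ω ∈ A ∧
        ∀ k ≤ n, ∑ i ∈ range k, ξ i ω ≤ ∑ i ∈ range n, ξ i ω} := by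
  set G : Set (ℕ → ℝ) :=
    {y | ∑ i ∈ range n, y i ∈ A ∧ ∀ k ≤ n, ∑ i ∈ range k, y i ≤ ∑ i ∈ range n, y i}
  have hsum : ∀ k, Measurable fun y : ℕ → ℝ => ∑ i ∈ range k, y i :=
    fun k => Finset.measurable_sum _ fun i _ => measurable_pi_apply i
  have hG : MeasurableSet G := by
    simp only [G, Set.ofPred_and, Set.ofPred_forall]
    exact (hsum n hA).inter (.iInter fun k => .iInter fun _ => measurableSet_le (hsum k) (hsum n))
  have hshift : ∀ j, P ((fun ω i => ξ (cyclicShift n j i) ω) ⁻¹' G) =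
      P ((fun ω i => ξ i ω) ⁻¹' G) := by
    intro j
    rw [← Measure.map_apply_of_aemeasurable (aemeasurable_pi_lambda _ fun i => hξ _) hG,
      ← Measure.map_apply_of_aemeasurable (aemeasurable_pi_lambda _ hξ) hG,
      h.map_comp_eq_map hξ hlaw (cyclicShift_injective n j)]
  have hcover : {ω | ∑ i ∈ range n, ξ i ω ∈ A} ⊆
      ⋃ j ∈ range n, (fun ω i => ξ (cyclicShift n j i) ω) ⁻¹' G := by
    intro ω hω
    obtain ⟨j, hj, hle⟩ := exists_rotate_sum_range_le (ξ · ω) hn (hA0 hω)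
    have hpartial : ∀ k ≤ n, ∑ i ∈ range k, ξ (cyclicShift n j i) ω =
        ∑ i ∈ range k, ξ ((j + i) % n) ω := fun k hk => sum_range_cyclicShift (ξ · ω) j hk
    have htotal : ∑ i ∈ range n, ξ (cyclicShift n j i) ω = ∑ i ∈ range n, ξ i ω :=
      (hpartial n le_rfl).trans (sum_range_rotate (ξ · ω) n j)
    refine Set.mem_biUnion (mem_range.mpr hj) ⟨?_, fun k hk => ?_⟩
    · rw [htotal]
      exact hω
    · rw [hpartial k hk, htotal]
      exact hle k hk
  calc P {ω | ∑ i ∈ range n, ξ i ω ∈ A}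
      ≤ ∑ j ∈ range n, P ((fun ω i => ξ (cyclicShift n j i) ω) ⁻¹' G) :=
        (measure_mono hcover).trans (measure_biUnion_finset_le _ _)
    _ = n * P ((fun ω i => ξ i ω) ⁻¹' G) := by
        simp only [hshift, sum_const, card_range, nsmul_eq_mul]

lemma iIndepFun.map_sum_eq_gaussianReal [IsProbabilityMeasure P] {ι : Type*} {ξ : ι → Ω → ℝ}
    (h : iIndepFun ξ P) {m : ι → ℝ} {v : ι → ℝ≥0}
    (hlaw : ∀ i, P.map (ξ i) = gaussianReal (m i) (v i)) (s : Finset ι) :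
    P.map (∑ i ∈ s, ξ i) = gaussianReal (∑ i ∈ s, m i) (∑ i ∈ s, v i) := by
  classical
  have hξ : ∀ i, AEMeasurable (ξ i) P := fun i =>
    AEMeasurable.of_map_ne_zero (hlaw i ▸ IsProbabilityMeasure.ne_zero _)
  induction s using Finset.induction_on with
  | empty =>
    rw [sum_empty, sum_empty, sum_empty, gaussianReal_zero_var]
    exact (Measure.map_const P 0).trans (by rw [measure_univ, one_smul])
  | insert a s ha ih =>
    rw [sum_insert ha, sum_insert ha, sum_insert ha]
    exact gaussianReal_add_gaussianReal_of_indepFun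
      (h.indepFun_finsetSum_of_notMem₀ hξ ha).symm (hlaw a) ih

lemma gaussianPDFReal_le_of_le {m x y : ℝ} (v : ℝ≥0) (hmx : m ≤ x) (hxy : x ≤ y) :
    gaussianPDFReal m v y ≤ gaussianPDFReal m v x := by
  unfold gaussianPDFReal
  gcongr

lemma sqrt_mul_gaussianPDFReal_le {v w : ℝ≥0} (hv : v ≠ 0) (hvw : v ≤ w) (m x : ℝ) :
    √v * gaussianPDFReal m v x ≤ √w * gaussianPDFReal m w x := by
  have hv' : (0 : ℝ) < v := by positivity
  have hw' : (0 : ℝ) < w := hv'.trans_le hvw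
  have hsqrt : ∀ u : ℝ, 0 < u → √u * (√(2 * π * u))⁻¹ = (√(2 * π))⁻¹ := fun u hu => by
    rw [sqrt_mul (by positivity), mul_inv, mul_left_comm, mul_inv_cancel₀ (by positivity),
      mul_one]
  simp only [gaussianPDFReal, ← mul_assoc, hsqrt _ hv', hsqrt _ hw']
  refine mul_le_mul_of_nonneg_left (exp_le_exp.mpr ?_) (by positivity)
  rw [neg_div, neg_div, neg_le_neg_iff]
  gcongr

lemma ofReal_mul_gaussianPDFReal_le_gaussianReal_Ioo {m a b : ℝ} (v : ℝ≥0) (hma : m ≤ a)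
    (hab : a ≤ b) :
    ENNReal.ofReal ((b - a) * gaussianPDFReal m v b) ≤ gaussianReal m v (Set.Ioo a b) := by
  rcases eq_or_ne v 0 with rfl | hv
  · simp [gaussianPDFReal_zero_var]
  rw [gaussianReal_apply_eq_integral _ hv]
  refine ENNReal.ofReal_le_ofReal ?_
  have := setIntegral_ge_of_const_le (s := Set.Ioo a b) (μ := volume) measurableSet_Ioo
    (by simp) (fun x hx => gaussianPDFReal_le_of_le v (hma.trans hx.1.le) hx.2.le)
    (integrable_gaussianPDFReal m v).integrableOn
  rwa [Real.volume_real_Ioo_of_le hab, smul_eq_mul] at this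

lemma ofReal_div_sqrt_le_gaussianReal_Ioo {v : ℝ≥0} (hv : v ≠ 0) {δ : ℝ} (hδ : 0 ≤ δ) {n : ℕ}
    (hn : 1 ≤ n) :
    ENNReal.ofReal (δ * gaussianPDFReal 0 v δ / √n) ≤ gaussianReal 0 (n * v) (Set.Ioo 0 δ) := by
  refine le_trans (ENNReal.ofReal_le_ofReal ?_)
    (ofReal_mul_gaussianPDFReal_le_gaussianReal_Ioo _ le_rfl hδ)
  have hn' : (1 : ℝ≥0) ≤ n := by exact_mod_cast hn
  have := sqrt_mul_gaussianPDFReal_le hv (le_mul_of_one_le_left' hn') 0 δ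
  rw [NNReal.coe_mul, NNReal.coe_natCast, sqrt_mul (by positivity), mul_assoc,
    mul_left_comm] at this
  rw [sub_zero, div_le_iff₀ (by positivity), mul_assoc, mul_comm _ √(n : ℝ)]
  exact mul_le_mul_of_nonneg_left (le_of_mul_le_mul_left this (by positivity)) hδ

theorem iIndepFun.ofReal_div_sqrt_le_mul_measure_ballot [IsProbabilityMeasure P]
    {ξ : ℕ → Ω → ℝ} (h : iIndepFun ξ P) {v : ℝ≥0} (hv : v ≠ 0)
    (hlaw : ∀ i, P.map (ξ i) = gaussianReal 0 v) {δ : ℝ} (hδ : 0 ≤ δ) {n : ℕ} (hn : 1 ≤ n) :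
    ENNReal.ofReal (δ * gaussianPDFReal 0 v δ / √n) ≤
      n * P {ω | ∑ i ∈ range n, ξ i ω ∈ Set.Ioo 0 δ ∧
        ∀ k ≤ n, ∑ i ∈ range k, ξ i ω ≤ ∑ i ∈ range n, ξ i ω} := by
  have hξ : ∀ i, AEMeasurable (ξ i) P := fun i =>
    AEMeasurable.of_map_ne_zero (hlaw i ▸ IsProbabilityMeasure.ne_zero _)
  have hsum_law : P.map (fun ω => ∑ i ∈ range n, ξ i ω) = gaussianReal 0 (n * v) := by
    simpa [← Finset.sum_fn] using h.map_sum_eq_gaussianReal hlaw (range n)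
  have hsum_mem : P {ω | ∑ i ∈ range n, ξ i ω ∈ Set.Ioo 0 δ} =
      gaussianReal 0 (n * v) (Set.Ioo 0 δ) := by
    rw [← hsum_law, Measure.map_apply_of_aemeasurable
      (Finset.aemeasurable_fun_sum _ fun i _ => hξ i) measurableSet_Ioo]
    rfl
  calc ENNReal.ofReal (δ * gaussianPDFReal 0 v δ / √n)
      ≤ P {ω | ∑ i ∈ range n, ξ i ω ∈ Set.Ioo 0 δ} :=
        hsum_mem ▸ ofReal_div_sqrt_le_gaussianReal_Ioo hv hδ hn
    _ ≤ _ := h.measure_sum_range_mem_le_mul hξ hlaw measurableSet_Ioo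
        (fun _ hx => hx.1.le) hn

end ProbabilityTheory

theorem stmt11 {Ω : Type*} [MeasurableSpace Ω] (P : Measure Ω) [IsProbabilityMeasure P]
    (σ : ℝ) (hσ : 0 < σ) (δ : ℝ) (hδ0 : 0 < δ) (hδ1 : δ < 1)
    (ξ : ℕ → Ω → ℝ)
    (hindep : iIndepFun (m := fun _ => Real.measurableSpace) ξ P)
    (hlaw : ∀ k, Measure.map (ξ k) P = gaussianReal 0 ((σ ^ 2).toNNReal)) :
    ∃ C : ℝ, 0 < C ∧ ∀ n : ℕ, 1 ≤ n →
      1 / (C * (n : ℝ) ^ ((3 : ℝ) / 2)) ≤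
        (P {ω | (∑ i ∈ Finset.range n, ξ i ω) ∈ Set.Ioo (0 : ℝ) δ ∧
          ∀ k, 0 < k → k < n → (∑ i ∈ Finset.range k, ξ i ω) ≤ 1}).toReal := by
  have hv : (σ ^ 2).toNNReal ≠ 0 := by simp [hσ.ne']
  set c := δ * gaussianPDFReal 0 (σ ^ 2).toNNReal δ
  have hc : 0 < c := mul_pos hδ0 (gaussianPDFReal_pos _ _ _ hv)
  refine ⟨c⁻¹, inv_pos.mpr hc, fun n hn => ?_⟩
  set E := {ω | (∑ i ∈ Finset.range n, ξ i ω) ∈ Set.Ioo (0 : ℝ) δ ∧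
    ∀ k, 0 < k → k < n → (∑ i ∈ Finset.range k, ξ i ω) ≤ 1}
  have hballot : ENNReal.ofReal (c / √n) ≤ n * P E := by
    refine (hindep.ofReal_div_sqrt_le_mul_measure_ballot hv hlaw hδ0.le hn).trans ?_
    gcongr
    exact fun ω ⟨hS, hle⟩ => ⟨hS, fun k _ hk => (hle k hk.le).trans (hS.2.trans hδ1).le⟩
  have hreal : c / √n ≤ n * (P E).toReal := by
    rwa [ENNReal.ofReal_le_iff_le_toReal (by finiteness), ENNReal.toReal_mul,
      ENNReal.toReal_natCast] at hballot
  have hn' : (0 : ℝ) < n := by exact_mod_cast hn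
  have hpow : (n : ℝ) ^ ((3 : ℝ) / 2) = n * √n := by
    rw [sqrt_eq_rpow, ← rpow_one_add' hn'.le (by norm_num)]
    norm_num
  rw [hpow, one_div, mul_inv, inv_inv, ← div_eq_mul_inv, div_le_iff₀ (by positivity)]
  rw [div_le_iff₀ (by positivity)] at hreal
  linarith
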